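/- Let (X, d) be an infinite compact metric space. Then I(X) with the weak* topology satisfies the disjoint approximation property in the following sense: for every ε > 0 there exist continuous maps g₁, g₂ : I(X) → I(X) such that g₁(I(X)) ∩ g₂(I(X)) = ∅ and d̃(g_i(μ), μ) < ε for all μ ∈ I(X) and i = 1, 2, where d̃ is the metric d̃(μ, ν) = Σ_{n=1}^∞ 2^{−n}·d̃_n(μ, ν) on I(X). -/

import Mathlib

/-!
With `D = diam X`, `x₀` an accumulation point, `y₀ ≠ x₀` close to it, `a = K·D` and `b = a + 1`,
take `g₁ μ = μ ⊕ (-a) ⊙ δ_{x₀}` and `g₂ μ = (μ ∘ T) ⊕ (-b) ⊙ δ_{x₀}`, where the max-plus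
kernel `T = drain` moves the mass near `x₀` over to `y₀`. Since `μ φ ≥ φ x₀ - n·D` for `n`-Lipschitz `φ`, the extra
point mass is invisible to `n-LIP` for `n ≤ K`, and `T` moves such `φ` by `O(n·d(y₀, x₀))`; the
terms `n > K` of the series `d̃` add at most `2^{-K}·D`. The images are disjoint because the cone
`ψ = -(b / d(y₀, x₀))·d(·, x₀)` satisfies `T ψ ≤ -b`, so every `g₂ ν` gives it the value `-b`,
while every `g₁ μ` gives it a value `≥ -a`.
-/

/-- An idempotent (Maslov) probability measure on a topological space `X` is a functional
`μ : C(X, ℝ) → ℝ` that is normalized on constants, shifts under addition of constants, and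
turns pointwise maxima into maxima. -/
def IsIdemMeasure {X : Type*} [TopologicalSpace X] (μ : C(X, ℝ) → ℝ) : Prop :=
  (∀ c : ℝ, μ (ContinuousMap.const X c) = c) ∧
  (∀ (c : ℝ) (φ : C(X, ℝ)), μ (ContinuousMap.const X c + φ) = c + μ φ) ∧
  (∀ φ ψ : C(X, ℝ), μ (φ ⊔ ψ) = max (μ φ) (μ ψ))

/-- The space `I(X)` of idempotent probability measures on `X`; as a subtype of the product
`(C(X, ℝ) → ℝ)` it automatically carries the weak* (pointwise convergence) topology. -/
abbrev IdemMeasure (X : Type*) [TopologicalSpace X] :=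
  {μ : C(X, ℝ) → ℝ // IsIdemMeasure μ}

/-- `n-LIP(X, d)`: the continuous functions that are Lipschitz with constant `n`. -/
def nLip (X : Type*) [MetricSpace X] (n : ℕ) : Set C(X, ℝ) :=
  {φ | ∀ x y : X, |φ x - φ y| ≤ (n : ℝ) * dist x y}

/-- The pseudometric `d̂ₙ(μ, ν) = sup { |μ(φ) − ν(φ)| : φ ∈ n-LIP(X, d) }`. -/
noncomputable def dHat {X : Type*} [MetricSpace X] (n : ℕ) (μ ν : C(X, ℝ) → ℝ) : ℝ :=
  sSup {r : ℝ | ∃ φ ∈ nLip X n, r = |μ φ - ν φ|}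

/-- `d̃ₙ = (1/n)·d̂ₙ`. -/
noncomputable def dTilde {X : Type*} [MetricSpace X] (n : ℕ) (μ ν : C(X, ℝ) → ℝ) : ℝ :=
  (1 / (n : ℝ)) * dHat n μ ν

/-- `d̃(μ, ν) = Σ_{n=1}^∞ 2^{−n}·d̃ₙ(μ, ν)`. -/
noncomputable def dMet {X : Type*} [MetricSpace X] (μ ν : C(X, ℝ) → ℝ) : ℝ :=
  ∑' k : ℕ, (1 / 2 ^ (k + 1) : ℝ) * dTilde (k + 1) μ ν

namespace IsIdemMeasure

variable {X : Type*} [TopologicalSpace X] {μ : C(X, ℝ) → ℝ}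

theorem map_const (hμ : IsIdemMeasure μ) (c : ℝ) : μ (ContinuousMap.const X c) = c :=
  hμ.1 c

theorem map_const_add (hμ : IsIdemMeasure μ) (c : ℝ) (φ : C(X, ℝ)) :
    μ (ContinuousMap.const X c + φ) = c + μ φ :=
  hμ.2.1 c φ

theorem map_sup (hμ : IsIdemMeasure μ) (φ ψ : C(X, ℝ)) : μ (φ ⊔ ψ) = max (μ φ) (μ ψ) :=
  hμ.2.2 φ ψ

theorem mono (hμ : IsIdemMeasure μ) {φ ψ : C(X, ℝ)} (h : φ ≤ ψ) : μ φ ≤ μ ψ := by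
  rw [← sup_eq_right.mpr h, hμ.map_sup]
  exact le_max_left _ _

theorem apply_le_of_forall_le (hμ : IsIdemMeasure μ) {φ : C(X, ℝ)} {c : ℝ}
    (h : ∀ x, φ x ≤ c) : μ φ ≤ c :=
  hμ.map_const c ▸ hμ.mono h

theorem le_apply_of_forall_le (hμ : IsIdemMeasure μ) {φ : C(X, ℝ)} {c : ℝ}
    (h : ∀ x, c ≤ φ x) : c ≤ μ φ :=
  hμ.map_const c ▸ hμ.mono h

theorem abs_sub_le (hμ : IsIdemMeasure μ) {φ ψ : C(X, ℝ)} {c : ℝ}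
    (h : ∀ x, |φ x - ψ x| ≤ c) : |μ φ - μ ψ| ≤ c := by
  have key : ∀ {f g : C(X, ℝ)}, (∀ x, |f x - g x| ≤ c) → μ f ≤ c + μ g := fun {f g} h => by
    rw [← hμ.map_const_add]
    exact hμ.mono fun x => show f x ≤ c + g x by linarith [(abs_le.mp (h x)).2]
  rw [abs_sub_le_iff]
  constructor
  · linarith [key h]
  · linarith [key fun x => (abs_sub_comm (ψ x) (φ x)).trans_le (h x)]

theorem comp (hμ : IsIdemMeasure μ) {T : C(X, ℝ) → C(X, ℝ)}
    (hconst : ∀ c, T (ContinuousMap.const X c) = ContinuousMap.const X c)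
    (hconst_add : ∀ c φ, T (ContinuousMap.const X c + φ) = ContinuousMap.const X c + T φ)
    (hsup : ∀ φ ψ, T (φ ⊔ ψ) = T φ ⊔ T ψ) : IsIdemMeasure (μ ∘ T) :=
  ⟨fun c => by simp [hconst, hμ.map_const], fun c φ => by simp [hconst_add, hμ.map_const_add],
    fun φ ψ => by simp [hsup, hμ.map_sup]⟩

end IsIdemMeasure

section JoinDirac

variable {X : Type*} [TopologicalSpace X]

def joinDirac (m : C(X, ℝ) → ℝ) (x₀ : X) (a : ℝ) : C(X, ℝ) → ℝ :=
  fun φ => max (m φ) (φ x₀ - a)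

theorem isIdemMeasure_joinDirac {m : C(X, ℝ) → ℝ} (hm : IsIdemMeasure m) (x₀ : X) {a : ℝ}
    (ha : 0 ≤ a) : IsIdemMeasure (joinDirac m x₀ a) := by
  refine ⟨fun c => ?_, fun c φ => ?_, fun φ ψ => ?_⟩
  · simp only [joinDirac, hm.map_const, ContinuousMap.const_apply]
    exact max_eq_left (by linarith)
  · simp only [joinDirac, hm.map_const_add, ContinuousMap.add_apply,
      ContinuousMap.const_apply, add_sub_assoc, max_add_add_left]
  · simp only [joinDirac, hm.map_sup, ContinuousMap.sup_apply, ← max_sub_sub_right,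
      max_max_max_comm]

theorem continuous_joinDirac (x₀ : X) (a : ℝ) :
    Continuous fun m : C(X, ℝ) → ℝ => joinDirac m x₀ a :=
  continuous_pi fun φ => (continuous_apply φ).max continuous_const

end JoinDirac

theorem abs_max_sub_le_of {p q r e : ℝ} (hp : |p - r| ≤ e) (hq : q - r ≤ e) :
    |max p q - r| ≤ e := by
  rcases le_total p q with h | h
  · rw [max_eq_right h, abs_le]
    constructor <;> linarith [(abs_le.mp hp).1]
  · rwa [max_eq_left h]

theorem tsum_half_pow_mul_le {t : ℕ → ℝ} {c E : ℝ} (K : ℕ) (ht0 : ∀ k, 0 ≤ t k)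
    (hhead : ∀ k < K, t k ≤ c) (ht : ∀ k, t k ≤ c + E) :
    ∑' k, (1 / 2 : ℝ) ^ (k + 1) * t k ≤ c + (1 / 2) ^ K * E := by
  set w : ℕ → ℝ := fun k => (1 / 2) ^ (k + 1)
  have hw : HasSum w 1 := by
    have h := hasSum_geometric_two.mul_left (1 / 2 : ℝ)
    rw [show (1 / 2 : ℝ) * 2 = 1 by norm_num] at h
    simpa only [w, pow_succ'] using h
  have hw_tail : ∑' n, w (n + K) = (1 / 2) ^ K := by
    simp only [w, show ∀ n, (1 / 2 : ℝ) ^ (n + K + 1) = (1 / 2) ^ K * (1 / 2) ^ (n + 1) from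
      fun n => by ring, tsum_mul_left, hw.tsum_eq, mul_one]
  have hw_split := hw.summable.sum_add_tsum_nat_add K
  rw [hw.tsum_eq, hw_tail] at hw_split
  have hs : Summable fun k => w k * t k :=
    .of_nonneg_of_le (fun k => mul_nonneg (by positivity) (ht0 k))
      (fun k => mul_le_mul_of_nonneg_left (ht k) (by positivity)) (hw.summable.mul_right (c + E))
  have hhead_le : ∑ k ∈ Finset.range K, w k * t k ≤ (∑ k ∈ Finset.range K, w k) * c := by
    rw [Finset.sum_mul]
    exact Finset.sum_le_sum fun k hk =>
      mul_le_mul_of_nonneg_left (hhead k (Finset.mem_range.mp hk)) (by positivity)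
  have htail_le : ∑' n, w (n + K) * t (n + K) ≤ (1 / 2) ^ K * (c + E) := by
    rw [← hw_tail, ← tsum_mul_right]
    exact ((summable_nat_add_iff K).mpr hs).tsum_le_tsum
      (fun n => mul_le_mul_of_nonneg_left (ht _) (by positivity))
      (((summable_nat_add_iff K).mpr hw.summable).mul_right _)
  rw [show ∑ k ∈ Finset.range K, w k = 1 - (1 / 2) ^ K by linarith] at hhead_le
  rw [← hs.sum_add_tsum_nat_add K]
  linarith

section Metric

variable {X : Type*} [MetricSpace X] {μ ν : C(X, ℝ) → ℝ}

theorem dTilde_nonneg (n : ℕ) : 0 ≤ dTilde n μ ν :=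
  mul_nonneg (by positivity) (Real.sSup_nonneg (by rintro r ⟨φ, -, rfl⟩; exact abs_nonneg _))

theorem dTilde_le {n : ℕ} {B : ℝ} (hB : 0 ≤ B) (h : ∀ φ ∈ nLip X n, |μ φ - ν φ| ≤ n * B) :
    dTilde n μ ν ≤ B := by
  rcases n.eq_zero_or_pos with rfl | hn
  · simpa [dTilde] using hB
  rw [dTilde, one_div, inv_mul_le_iff₀ (by exact_mod_cast hn)]
  exact Real.sSup_le (by rintro r ⟨φ, hφ, rfl⟩; exact h φ hφ) (by positivity)

theorem dMet_le {K : ℕ} {c E : ℝ} (hc : 0 ≤ c) (hE : 0 ≤ E)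
    (h : ∀ n, ∀ φ ∈ nLip X n, |μ φ - ν φ| ≤ n * c + max 0 ((n : ℝ) - K) * E) :
    dMet μ ν ≤ c + (1 / 2) ^ K * E := by
  simp only [dMet, ← one_div_pow]
  refine tsum_half_pow_mul_le K (fun k => dTilde_nonneg _)
    (fun k hk => dTilde_le hc fun φ hφ => (h _ φ hφ).trans ?_)
    (fun k => dTilde_le (by positivity) fun φ hφ => (h _ φ hφ).trans ?_)
  · have : ((k + 1 : ℕ) : ℝ) ≤ K := by exact_mod_cast hk
    rw [max_eq_left (by linarith), zero_mul, add_zero]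
  · have : max 0 (((k + 1 : ℕ) : ℝ) - K) ≤ (k + 1 : ℕ) :=
      max_le (Nat.cast_nonneg _) (by linarith [(K.cast_nonneg : (0 : ℝ) ≤ K)])
    nlinarith

theorem IsIdemMeasure.sub_le_apply_of_mem_nLip {μ : C(X, ℝ) → ℝ} (hμ : IsIdemMeasure μ)
    {D : ℝ} (hD : ∀ x y : X, dist x y ≤ D) {n : ℕ} {φ : C(X, ℝ)} (hφ : φ ∈ nLip X n)
    (x₀ : X) : φ x₀ - n * D ≤ μ φ :=
  hμ.le_apply_of_forall_le fun x => by
    nlinarith [(abs_le.mp (hφ x₀ x)).2, hD x₀ x, (Nat.cast_nonneg n : (0 : ℝ) ≤ n)]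

theorem IsIdemMeasure.abs_joinDirac_sub_le {μ m : C(X, ℝ) → ℝ} (hμ : IsIdemMeasure μ)
    {D : ℝ} (hD : ∀ x y : X, dist x y ≤ D) {K n : ℕ} {φ : C(X, ℝ)} (hφ : φ ∈ nLip X n)
    (x₀ : X) {a e : ℝ} (ha : K * D ≤ a) (he : max 0 ((n : ℝ) - K) * D ≤ e)
    (hm : |m φ - μ φ| ≤ e) : |joinDirac m x₀ a φ - μ φ| ≤ e := by
  refine abs_max_sub_le_of hm ?_
  have hD0 : 0 ≤ D := dist_self x₀ ▸ hD x₀ x₀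
  have : ((n : ℝ) - K) * D ≤ max 0 ((n : ℝ) - K) * D :=
    mul_le_mul_of_nonneg_right (le_max_right _ _) hD0
  linarith [hμ.sub_le_apply_of_mem_nLip hD hφ x₀]

/-- On measures, `μ ↦ μ ∘ drain x₀ y₀ b κ` lowers the weight of each point `x` within
`dist y₀ x₀` of `x₀` by up to `b` and copies it to `y₀`, at a cost `κ` per unit of distance
beyond that radius. -/
noncomputable def drain (x₀ y₀ : X) (b κ : ℝ) (φ : C(X, ℝ)) : C(X, ℝ) :=
  ⟨fun x => max (φ x - b * max (1 - dist x x₀ / dist y₀ x₀) 0)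
    (φ y₀ - κ * max (dist x x₀ - dist y₀ x₀) 0), by fun_prop⟩

@[simp]
theorem drain_apply (x₀ y₀ : X) (b κ : ℝ) (φ : C(X, ℝ)) (x : X) :
    drain x₀ y₀ b κ φ x = max (φ x - b * max (1 - dist x x₀ / dist y₀ x₀) 0)
      (φ y₀ - κ * max (dist x x₀ - dist y₀ x₀) 0) :=
  rfl

variable {x₀ y₀ : X} {b κ : ℝ}

theorem drain_const (hy : y₀ ≠ x₀) (hb : 0 ≤ b) (hκ : 0 ≤ κ) (c : ℝ) :
    drain x₀ y₀ b κ (ContinuousMap.const X c) = ContinuousMap.const X c := by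
  ext x
  simp only [drain_apply, ContinuousMap.const_apply]
  rcases le_total (dist x x₀) (dist y₀ x₀) with h | h
  · rw [max_eq_right (by linarith : dist x x₀ - dist y₀ x₀ ≤ 0), mul_zero, sub_zero]
    exact max_eq_right (by nlinarith [le_max_right (1 - dist x x₀ / dist y₀ x₀) 0])
  · have : 1 ≤ dist x x₀ / dist y₀ x₀ := (one_le_div (dist_pos.mpr hy)).mpr h
    rw [max_eq_right (by linarith : 1 - dist x x₀ / dist y₀ x₀ ≤ 0), mul_zero, sub_zero]
    exact max_eq_left (by nlinarith [le_max_right (dist x x₀ - dist y₀ x₀) 0])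

theorem drain_const_add (c : ℝ) (φ : C(X, ℝ)) :
    drain x₀ y₀ b κ (ContinuousMap.const X c + φ) =
      ContinuousMap.const X c + drain x₀ y₀ b κ φ := by
  ext x
  simp only [drain_apply, ContinuousMap.add_apply, ContinuousMap.const_apply, add_sub_assoc,
    max_add_add_left]

theorem drain_sup (φ ψ : C(X, ℝ)) :
    drain x₀ y₀ b κ (φ ⊔ ψ) = drain x₀ y₀ b κ φ ⊔ drain x₀ y₀ b κ ψ := by
  ext x
  simp only [drain_apply, ContinuousMap.sup_apply, ← max_sub_sub_right, max_max_max_comm]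

theorem IsIdemMeasure.comp_drain {μ : C(X, ℝ) → ℝ} (hμ : IsIdemMeasure μ) (hy : y₀ ≠ x₀)
    (hb : 0 ≤ b) (hκ : 0 ≤ κ) : IsIdemMeasure (μ ∘ drain x₀ y₀ b κ) :=
  hμ.comp (drain_const hy hb hκ) drain_const_add drain_sup

theorem abs_drain_sub_le (hy : y₀ ≠ x₀) (hb : 0 ≤ b) {D : ℝ} (hD : ∀ x y : X, dist x y ≤ D)
    (K : ℕ) {n : ℕ} {φ : C(X, ℝ)} (hφ : φ ∈ nLip X n) (x : X) :
    |drain x₀ y₀ b (2 * K) φ x - φ x| ≤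
      n * (3 * dist y₀ x₀) + max 0 ((n : ℝ) - K) * D := by
  rw [drain_apply, abs_sub_le_iff]
  set d := dist x x₀
  set δ := dist y₀ x₀
  have hδ : 0 < δ := dist_pos.mpr hy
  have hn : (0 : ℝ) ≤ n := n.cast_nonneg
  have hK : (0 : ℝ) ≤ K := K.cast_nonneg
  have hd : 0 ≤ d := dist_nonneg
  have hφxy : |φ x - φ y₀| ≤ n * (d + δ) :=
    (hφ x y₀).trans (mul_le_mul_of_nonneg_left (dist_triangle_right x y₀ x₀) hn)
  have hexcess : ((n : ℝ) - K) * d ≤ max 0 ((n : ℝ) - K) * D :=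
    mul_le_mul (le_max_right _ _) (hD x x₀) hd (le_max_left _ _)
  have hβ : 0 ≤ b * max (1 - d / δ) 0 := mul_nonneg hb (le_max_right _ _)
  have hγ : 0 ≤ 2 * K * max (d - δ) 0 := by positivity
  have hnδ : 0 ≤ n * (3 * δ) := by positivity
  have hD0 : 0 ≤ max 0 ((n : ℝ) - K) * D :=
    mul_nonneg (le_max_left _ _) (dist_self x ▸ hD x x)
  constructor
  · refine sub_le_iff_le_add.mpr (max_le (by linarith) ?_)
    rcases le_total d (2 * δ) with h | h
    · nlinarith [(abs_le.mp hφxy).1]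
    · -- beyond `2δ` the cost `2K (d - δ)` outgrows the Lipschitz bound whenever `n ≤ K`
      rw [max_eq_left (by linarith : 0 ≤ d - δ)]
      nlinarith [(abs_le.mp hφxy).1, mul_nonneg hK (by linarith : 0 ≤ d - 2 * δ)]
  · rcases le_total d δ with h | h
    · rw [max_eq_right (by linarith : d - δ ≤ 0), mul_zero, sub_zero]
      nlinarith [(abs_le.mp hφxy).2, le_max_right (φ x - b * max (1 - d / δ) 0) (φ y₀)]
    · have : 1 ≤ d / δ := (one_le_div hδ).mpr h
      rw [max_eq_right (by linarith : 1 - d / δ ≤ 0), mul_zero, sub_zero]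
      nlinarith [le_max_left (φ x) (φ y₀ - 2 * K * max (d - δ) 0)]

def cone (x₀ : X) (L : ℝ) : C(X, ℝ) :=
  ⟨fun x => -(L * dist x x₀), by fun_prop⟩

@[simp]
theorem cone_apply (x₀ : X) (L : ℝ) (x : X) : cone x₀ L x = -(L * dist x x₀) :=
  rfl

theorem drain_cone_le (hy : y₀ ≠ x₀) (hb : 0 ≤ b) (hκ : 0 ≤ κ) (x : X) :
    drain x₀ y₀ b κ (cone x₀ (b / dist y₀ x₀)) x ≤ -b := by
  have hδ : 0 < dist y₀ x₀ := dist_pos.mpr hy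
  rw [drain_apply, cone_apply, cone_apply, div_mul_cancel₀ b hδ.ne']
  apply max_le
  · have := mul_le_mul_of_nonneg_left (le_max_left (1 - dist x x₀ / dist y₀ x₀) 0) hb
    have : b / dist y₀ x₀ * dist x x₀ = b * (dist x x₀ / dist y₀ x₀) := by ring
    nlinarith
  · nlinarith [mul_nonneg hκ (le_max_right (dist x x₀ - dist y₀ x₀) 0)]

end Metric

theorem exists_ne_dist_lt (X : Type*) [MetricSpace X] [CompactSpace X] [Infinite X] {r : ℝ}
    (hr : 0 < r) : ∃ x₀ y₀ : X, y₀ ≠ x₀ ∧ dist y₀ x₀ < r := by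
  obtain ⟨x₀, hx₀⟩ := exists_nhds_ne_neBot X
  obtain ⟨y₀, hy, hδ⟩ :=
    hx₀.nonempty_of_mem (inter_mem_nhdsWithin {x₀}ᶜ (Metric.ball_mem_nhds x₀ hr))
  exact ⟨x₀, y₀, hy, hδ⟩

/-- For an infinite compact metric space `(X, d)`, the space `I(X)` with
the weak* topology satisfies the disjoint approximation property: for every `ε > 0` there are
continuous maps `g₁, g₂ : I(X) → I(X)` with disjoint images that move every point by
`d̃`-distance less than `ε`. -/
theorem statement11 {X : Type*} [MetricSpace X] [CompactSpace X] [Infinite X]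
    (ε : ℝ) (hε : 0 < ε) :
    ∃ g₁ g₂ : IdemMeasure X → IdemMeasure X,
      Continuous g₁ ∧ Continuous g₂ ∧
      Set.range g₁ ∩ Set.range g₂ = ∅ ∧
      ∀ μ : IdemMeasure X, dMet (g₁ μ).val μ.val < ε ∧ dMet (g₂ μ).val μ.val < ε := by
  set D := Metric.diam (Set.univ : Set X)
  have hD : ∀ x y : X, dist x y ≤ D := fun x y =>
    Metric.dist_le_diam_of_mem isCompact_univ.isBounded trivial trivial
  have hD0 : 0 ≤ D := Metric.diam_nonneg
  obtain ⟨x₀, y₀, hy, hδ⟩ := exists_ne_dist_lt X (by positivity : 0 < ε / 6)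
  obtain ⟨K, hK⟩ : ∃ K : ℕ, (1 / 2 : ℝ) ^ K * D < ε / 2 := by
    have h := (tendsto_pow_atTop_nhds_zero_of_lt_one (by norm_num : (0 : ℝ) ≤ 1 / 2)
      (by norm_num)).mul_const D
    rw [zero_mul] at h
    exact (h.eventually (gt_mem_nhds (by positivity))).exists
  set a : ℝ := K * D
  set b : ℝ := a + 1
  have ha : 0 ≤ a := by positivity
  have hb : 0 ≤ b := by positivity
  refine ⟨fun μ => ⟨joinDirac μ.1 x₀ a, isIdemMeasure_joinDirac μ.2 x₀ ha⟩,
    fun μ => ⟨joinDirac (μ.1 ∘ drain x₀ y₀ b (2 * K)) x₀ b,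
      isIdemMeasure_joinDirac (μ.2.comp_drain hy hb (by positivity)) x₀ hb⟩,
    ((continuous_joinDirac x₀ a).comp continuous_subtype_val).subtype_mk _,
    ((continuous_joinDirac x₀ b).comp
      ((Pi.continuous_precomp _).comp continuous_subtype_val)).subtype_mk _, ?_,
    fun μ => ⟨?_, ?_⟩⟩
  · refine Set.eq_empty_iff_forall_notMem.mpr ?_
    rintro _ ⟨⟨μ, rfl⟩, ⟨ν, hν⟩⟩
    set ψ := cone x₀ (b / dist y₀ x₀)
    have h₁ : -a ≤ joinDirac μ.1 x₀ a ψ := le_max_of_le_right (by simp [ψ])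
    have h₂ : joinDirac (ν.1 ∘ drain x₀ y₀ b (2 * K)) x₀ b ψ ≤ -b :=
      max_le (ν.2.apply_le_of_forall_le (drain_cone_le hy hb (by positivity))) (by simp [ψ])
    linarith [congrFun (congrArg Subtype.val hν) ψ]
  · refine (dMet_le (K := K) le_rfl hD0 fun n φ hφ => ?_).trans_lt (by linarith)
    refine μ.2.abs_joinDirac_sub_le hD hφ x₀ le_rfl (by simp) ?_
    rw [sub_self, abs_zero]
    exact add_nonneg (by simp) (mul_nonneg (le_max_left _ _) hD0)
  · refine (dMet_le (K := K) (c := 3 * dist y₀ x₀) (by positivity) hD0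
      fun n φ hφ => ?_).trans_lt (by linarith)
    refine μ.2.abs_joinDirac_sub_le hD hφ x₀ (by linarith)
      (le_add_of_nonneg_left (by positivity)) ?_
    exact μ.2.abs_sub_le (abs_drain_sub_le hy hb hD K hφ)
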